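/- Merging two overlapping guards is beneficial if and only if the ratio of the cardinality of their intersection to the cardinality of their union exceeds c_e/(c_r + c_e). Formally, for nonnegative reals s_x, s_y, s_xy with s_xy ≤ min(s_x, s_y) and s_x + s_y - s_xy > 0, and positive constants c_r, c_e: (s_x + s_y - s_xy)·(c_r + 2·c_e) < s_x·(c_r + c_e) + s_y·(c_r + c_e) if and only if s_xy / (s_x + s_y - s_xy) > c_e / (c_r + c_e). -/
import Mathlib


/-- Merging two overlapping guards is beneficial iff the overlap ratio
exceeds `ce / (cr + ce)`. -/
theorem merge_beneficial_iff (sx sy sxy cr ce : ℝ)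
    (hsx : 0 ≤ sx) (hsy : 0 ≤ sy) (hsxy : 0 ≤ sxy)
    (hle : sxy ≤ min sx sy) (hpos : 0 < sx + sy - sxy)
    (hcr : 0 < cr) (hce : 0 < ce) :
    (sx + sy - sxy) * (cr + 2 * ce) < sx * (cr + ce) + sy * (cr + ce) ↔
      sxy / (sx + sy - sxy) > ce / (cr + ce) := by
  rw [gt_iff_lt, div_lt_div_iff₀ (by linarith) hpos]
  constructor <;> intro h <;> nlinarith
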